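/- Let f be a right-continuous function on [0,1]^d of bounded HK-variation, and let f(x)=f(0)+f^+(x)−f^-(x) be its Jordan decomposition. Then the functions f^+ and f^- are right-continuous. -/

import Mathlib

open MeasureTheory Finset

noncomputable section

/-- The quasi-volume `Δ` of `f` over the box `[a,b]` in the coordinates of `S`;
the coordinates outside `S` are fixed according to the anchor point `p`. -/
def quasiVol {d : ℕ} (f : (Fin d → ℝ) → ℝ) (S : Finset (Fin d)) (p a b : Fin d → ℝ) : ℝ :=
  ∑ T ∈ S.powerset, (-1 : ℝ) ^ T.card *
    f (fun i => if i ∈ S then (if i ∈ T then a i else b i) else p i)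

/-- A grid (a partition generated by one-dimensional partitions of the sides) of the
box `[lo, hi]` in the coordinates of `S`. -/
structure Grid (d : ℕ) (S : Finset (Fin d)) (lo hi : Fin d → ℝ) where
  m : Fin d → ℕ
  t : Fin d → ℕ → ℝ
  mono : ∀ i ∈ S, ∀ j k : ℕ, j ≤ k → k ≤ m i → t i j ≤ t i k
  first : ∀ i ∈ S, t i 0 = lo i
  last : ∀ i ∈ S, t i (m i) = hi i

/-- The sum, over all cells of a grid, of the absolute value of the quasi-volume of the cell. -/
def gridSum {d : ℕ} (f : (Fin d → ℝ) → ℝ) (S : Finset (Fin d)) (p lo hi : Fin d → ℝ)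
    (G : Grid d S lo hi) : ℝ :=
  ∑ k ∈ Fintype.piFinset (fun i => Finset.range (if i ∈ S then G.m i else 1)),
    |quasiVol f S p (fun i => G.t i (k i)) (fun i => G.t i (k i + 1))|

/-- The variation in the sense of Vitali of `f` on the face of the box `[lo, hi]` with active
coordinates `S`, the remaining coordinates being fixed according to the anchor `p`:
the supremum of `gridSum` over all grids. -/
def vitaliVar {d : ℕ} (f : (Fin d → ℝ) → ℝ) (S : Finset (Fin d)) (p lo hi : Fin d → ℝ) : ℝ :=
  sSup (Set.range (gridSum f S p lo hi))

/-- The Vitali variation on the face `(S, p)` of `[lo, hi]` is bounded (finite). -/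
def BddVitali {d : ℕ} (f : (Fin d → ℝ) → ℝ) (S : Finset (Fin d)) (p lo hi : Fin d → ℝ) : Prop :=
  BddAbove (Set.range (gridSum f S p lo hi))

/-- Hardy–Krause-type variation of `f` on the box `[lo, hi]` with anchor `p`: the sum, over all
nonempty sets `S` of coordinates, of the Vitali variation of the restriction of `f` to the face
of `[lo, hi]` whose coordinates outside `S` are fixed according to `p`. -/
def hkVarOn {d : ℕ} (f : (Fin d → ℝ) → ℝ) (p lo hi : Fin d → ℝ) : ℝ :=
  ∑ S ∈ (Finset.univ : Finset (Fin d)).powerset.erase ∅, vitaliVar f S p lo hi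

/-- All the Vitali variations occurring in `hkVarOn` are bounded. -/
def BddHKVarOn {d : ℕ} (f : (Fin d → ℝ) → ℝ) (p lo hi : Fin d → ℝ) : Prop :=
  ∀ S ∈ (Finset.univ : Finset (Fin d)).powerset.erase ∅, BddVitali f S p lo hi

/-- The Hardy–Krause variation of `f` on `[0,1]^d`, anchored at `1`. -/
def hkVar {d : ℕ} (f : (Fin d → ℝ) → ℝ) : ℝ := hkVarOn f 1 0 1

/-- `f` has bounded Hardy–Krause variation (anchored at `1`). -/
def BddHKVar {d : ℕ} (f : (Fin d → ℝ) → ℝ) : Prop := BddHKVarOn f 1 0 1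

/-- The Hardy–Krause variation of `f` on the box `[0, a]`, anchored at `0`. -/
def hkVar0On {d : ℕ} (f : (Fin d → ℝ) → ℝ) (a : Fin d → ℝ) : ℝ := hkVarOn f 0 0 a

/-- The Hardy–Krause variation of `f` on `[0,1]^d`, anchored at `0`. -/
def hkVar0 {d : ℕ} (f : (Fin d → ℝ) → ℝ) : ℝ := hkVarOn f 0 0 1

/-- `f` has bounded Hardy–Krause variation anchored at `0`. -/
def BddHKVar0 {d : ℕ} (f : (Fin d → ℝ) → ℝ) : Prop := BddHKVarOn f 0 0 1

/-- `f` is completely monotone: every quasi-volume of an axis-parallel box contained in a face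
of `[0,1]^d` (coordinates outside the active set `S` being fixed at `0` or `1`) is nonnegative. -/
def CompletelyMonotone {d : ℕ} (f : (Fin d → ℝ) → ℝ) : Prop :=
  ∀ S : Finset (Fin d), S.Nonempty → ∀ p : Fin d → ℝ, (∀ i ∉ S, p i = 0 ∨ p i = 1) →
    ∀ a b : Fin d → ℝ, a ∈ Set.Icc (0 : Fin d → ℝ) 1 → b ∈ Set.Icc (0 : Fin d → ℝ) 1 →
      a ≤ b → 0 ≤ quasiVol f S p a b

/-- `f` is coordinatewise right-continuous at every point of `[0,1]^d`. -/
def RightCts {d : ℕ} (f : (Fin d → ℝ) → ℝ) : Prop :=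
  ∀ x ∈ Set.Icc (0 : Fin d → ℝ) 1, ∀ i : Fin d,
    Filter.Tendsto (fun y : ℝ => f (Function.update x i y))
      (nhdsWithin (x i) (Set.Icc (x i) 1)) (nhds (f x))

/-- The star-discrepancy of the points `x 1, …, x N` with respect to the measure `μ`. -/
def starDisc {d : ℕ} (N : ℕ) (x : Fin N → Fin d → ℝ) (μ : Measure (Fin d → ℝ)) : ℝ :=
  ⨆ a : Set.Icc (0 : Fin d → ℝ) 1,
    |(∑ n : Fin N, Set.indicator (Set.Icc 0 (a : Fin d → ℝ)) (fun _ => (1 : ℝ)) (x n)) / N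
      - (μ (Set.Icc 0 (a : Fin d → ℝ))).toReal|

/-!
Write `Δ_U g [a, b]` for the quasi-volume of `g` on the face `U` through `0`. By
inclusion–exclusion, `fp (x + (y - x i) e_i) - fp x` is the sum, over the faces `U ∋ i`, of the
`fp`-quasi-volume of the slab `[0, x] ∩ {x i ≤ z i ≤ y}`, which is nonnegative and monotone in `y`;
so it suffices that each of them tends to `0` as `y ↓ x i`. Suppose one stays above `c > 0`.
Since `f = f 0 + fp - fm` is right-continuous, the `f`-quasi-volumes of thin slabs tend to `0`,
so their `fm`-mass nearly equals their `fp`-mass. In any grid of `U`, the layer of cells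
containing `x i` then carries `fp`- and `fm`-mass overlapping by almost `c`, which cancels in `f`:
every grid sum of `f` is at most `Δ_U fp [0, 1] + Δ_U fm [0, 1] - 2 c`. As the Vitali variation
of a completely monotone function is its quasi-volume, this gives
`V_HK0 f ≤ V_HK0 fp + V_HK0 fm - 2 c`, contradicting the Jordan decomposition.
The claim for `fm` follows by applying this to `2 f 0 - f = f 0 + fm - fp`.
-/

set_option autoImplicit false

open Filter Topology Function

variable {d : ℕ}

def vertex (S : Finset (Fin d)) (p a b : Fin d → ℝ) (T : Finset (Fin d)) : Fin d → ℝ :=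
  fun j => if j ∈ S then (if j ∈ T then a j else b j) else p j

lemma quasiVol_eq_sum_vertex (f : (Fin d → ℝ) → ℝ) (S : Finset (Fin d)) (p a b : Fin d → ℝ) :
    quasiVol f S p a b = ∑ T ∈ S.powerset, (-1 : ℝ) ^ T.card * f (vertex S p a b T) := rfl

lemma quasiVol_congr (f : (Fin d → ℝ) → ℝ) (S : Finset (Fin d)) {p p' a a' b b' : Fin d → ℝ}
    (hp : ∀ j ∉ S, p j = p' j) (ha : ∀ j ∈ S, a j = a' j) (hb : ∀ j ∈ S, b j = b' j) :
    quasiVol f S p a b = quasiVol f S p' a' b' := by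
  simp only [quasiVol_eq_sum_vertex]
  refine sum_congr rfl fun T _ => ?_
  congr 2
  funext j
  by_cases hj : j ∈ S
  · simp [vertex, hj, ha j hj, hb j hj]
  · simp [vertex, hj, hp j hj]

lemma quasiVol_empty (f : (Fin d → ℝ) → ℝ) (p a b : Fin d → ℝ) :
    quasiVol f ∅ p a b = f p := by
  simp [quasiVol]

lemma quasiVol_sub (f g : (Fin d → ℝ) → ℝ) (S : Finset (Fin d)) (p a b : Fin d → ℝ) :
    quasiVol (fun z => f z - g z) S p a b = quasiVol f S p a b - quasiVol g S p a b := by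
  simp only [quasiVol_eq_sum_vertex, mul_sub, sum_sub_distrib]

lemma quasiVol_add (f g : (Fin d → ℝ) → ℝ) (S : Finset (Fin d)) (p a b : Fin d → ℝ) :
    quasiVol (fun z => f z + g z) S p a b = quasiVol f S p a b + quasiVol g S p a b := by
  simp only [quasiVol_eq_sum_vertex, mul_add, sum_add_distrib]

lemma quasiVol_const (c : ℝ) {S : Finset (Fin d)} (hS : S.Nonempty) (p a b : Fin d → ℝ) :
    quasiVol (fun _ => c) S p a b = 0 := by
  have h := congrArg (Int.cast : ℤ → ℝ) (sum_powerset_neg_one_pow_card_of_nonempty hS)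
  push_cast at h
  rw [quasiVol_eq_sum_vertex, ← sum_mul, h, zero_mul]

lemma quasiVol_peel (f : (Fin d → ℝ) → ℝ) {S : Finset (Fin d)} {i : Fin d} (hi : i ∈ S)
    (p a b : Fin d → ℝ) :
    quasiVol f S p a b =
      quasiVol f (S.erase i) (update p i (b i)) a b
        - quasiVol f (S.erase i) (update p i (a i)) a b := by
  have hie : i ∉ S.erase i := notMem_erase i S
  simp only [quasiVol_eq_sum_vertex]
  conv_lhs => rw [← insert_erase hi, sum_powerset_insert hie]
  rw [sub_eq_add_neg, ← sum_neg_distrib]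
  congr 1 <;> refine sum_congr rfl fun T hT => ?_
  all_goals
    have hiT : i ∉ T := fun h => hie (mem_powerset.1 hT h)
  · congr 2
    funext j
    by_cases hji : j = i
    · subst hji; simp [vertex, hiT, hi]
    · simp [vertex, hji]
  · rw [card_insert_of_notMem hiT, pow_succ]
    have : vertex (insert i (S.erase i)) p a b (insert i T)
        = vertex (S.erase i) (update p i (a i)) a b T := by
      funext j
      by_cases hji : j = i
      · subst hji; simp [vertex, hiT, hi]
      · simp [vertex, hji]
    rw [this]; ring

lemma quasiVol_eq_zero_of_eq (f : (Fin d → ℝ) → ℝ) {S : Finset (Fin d)} {i : Fin d} (hi : i ∈ S)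
    {p a b : Fin d → ℝ} (hab : a i = b i) :
    quasiVol f S p a b = 0 := by
  rw [quasiVol_peel f hi, hab, sub_self]

lemma quasiVol_split (f : (Fin d → ℝ) → ℝ) {S : Finset (Fin d)} {i : Fin d} (hi : i ∈ S)
    (p a b : Fin d → ℝ) (c : ℝ) :
    quasiVol f S p a b = quasiVol f S p a (update b i c) + quasiVol f S p (update a i c) b := by
  have hb : ∀ q, quasiVol f (S.erase i) q a (update b i c) = quasiVol f (S.erase i) q a b :=
    fun q => quasiVol_congr f _ (fun _ _ => rfl) (fun _ _ => rfl)
      fun j hj => update_of_ne (ne_of_mem_erase hj) c b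
  have ha : ∀ q, quasiVol f (S.erase i) q (update a i c) b = quasiVol f (S.erase i) q a b :=
    fun q => quasiVol_congr f _ (fun _ _ => rfl) (fun j hj => update_of_ne (ne_of_mem_erase hj) c a)
      fun _ _ => rfl
  simp only [quasiVol_peel f hi _ a, quasiVol_peel f hi _ (update a i c), update_self, ha, hb]
  ring

lemma Fintype.sum_piFinset_eq_sum_sum_update {ι β M : Type*} [Fintype ι] [DecidableEq ι]
    [DecidableEq β] [AddCommMonoid M] (n : ι → Finset β) (i : ι) (b : β) (g : (ι → β) → M) :
    ∑ k ∈ Fintype.piFinset n, g k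
      = ∑ v ∈ n i, ∑ k ∈ Fintype.piFinset (update n i {b}), g (update k i v) := by
  rw [← sum_product']
  refine sum_nbij' (fun k => (k i, update k i b)) (fun q => update q.2 i q.1) ?_ ?_ ?_ ?_ ?_
  · intro k hk
    rw [Fintype.mem_piFinset] at hk
    rw [mem_product, Fintype.mem_piFinset]
    refine ⟨hk i, fun j => ?_⟩
    by_cases hj : j = i
    · subst hj; simp
    · simpa [hj] using hk j
  · intro q hq
    rw [mem_product, Fintype.mem_piFinset] at hq
    rw [Fintype.mem_piFinset]
    intro j
    by_cases hj : j = i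
    · subst hj; simpa using hq.1
    · simpa [hj] using hq.2 j
  · intro k _
    simp
  · intro q hq
    have hqi : q.2 i = b := by simpa using (Fintype.mem_piFinset.1 (mem_product.1 hq).2) i
    ext j
    · simp
    · by_cases hj : j = i
      · subst hj; simp [hqi]
      · simp [hj]
  · intro k _
    simp

lemma sum_quasiVol_cells (f : (Fin d → ℝ) → ℝ) (S : Finset (Fin d)) (p : Fin d → ℝ)
    (m : Fin d → ℕ) (t : Fin d → ℕ → ℝ) :
    ∑ k ∈ Fintype.piFinset (fun j => range (if j ∈ S then m j else 1)),
      quasiVol f S p (fun j => t j (k j)) (fun j => t j (k j + 1))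
    = quasiVol f S p (fun j => t j 0) (fun j => t j (m j)) := by
  induction S using Finset.induction generalizing p with
  | empty => simp [quasiVol_empty]
  | @insert i S hiS ih =>
    have hins : i ∈ insert i S := mem_insert_self i S
    have hidx : update (fun j => range (if j ∈ insert i S then m j else 1)) i {0}
        = fun j => range (if j ∈ S then m j else 1) := by
      funext j
      by_cases hj : j = i
      · subst hj; simp [hiS]
      · simp [hj]
    have hcol : ∀ (v : ℕ) (k : Fin d → ℕ),
        quasiVol f (insert i S) p (fun j => t j (update k i v j))
            (fun j => t j (update k i v j + 1))
          = quasiVol f S (update p i (t i (v + 1))) (fun j => t j (k j)) (fun j => t j (k j + 1))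
            - quasiVol f S (update p i (t i v)) (fun j => t j (k j))
                (fun j => t j (k j + 1)) := by
      intro v k
      have hne : ∀ j ∈ S, j ≠ i := fun j hj h => hiS (h ▸ hj)
      rw [quasiVol_peel f hins, erase_insert hiS]
      simp only [update_self]
      congr 1 <;> exact quasiVol_congr f S (fun _ _ => rfl)
        (fun j hj => by rw [update_of_ne (hne j hj)]) (fun j hj => by rw [update_of_ne (hne j hj)])
    rw [Fintype.sum_piFinset_eq_sum_sum_update _ i 0, hidx, if_pos hins]
    simp only [hcol, sum_sub_distrib, ih]
    rw [← sum_sub_distrib, sum_range_sub (fun v => quasiVol f S (update p i (t i v))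
      (fun j => t j 0) (fun j => t j (m j))), quasiVol_peel f hins p, erase_insert hiS]

lemma sum_powerset_quasiVol (h : (Fin d → ℝ) → ℝ) (W : Finset (Fin d)) (a z : Fin d → ℝ) :
    ∑ U ∈ W.powerset, quasiVol h U a a z = h (fun j => if j ∈ W then z j else a j) := by
  induction W using Finset.induction generalizing a with
  | empty => simp [quasiVol_empty]
  | @insert i W hiW ih =>
    have hU : ∀ U ∈ W.powerset, i ∉ U := fun U hU h => hiW (mem_powerset.1 hU h)
    have hins : ∀ U ∈ W.powerset, quasiVol h (insert i U) a a z
        = quasiVol h U (update a i (z i)) (update a i (z i)) z - quasiVol h U a a z := by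
      intro U hUW
      rw [quasiVol_peel h (mem_insert_self i U), erase_insert (hU U hUW), update_eq_self]
      congr 1
      exact quasiVol_congr h U (fun _ _ => rfl)
        (fun j hj => (update_of_ne (ne_of_mem_of_not_mem hj (hU U hUW)) _ a).symm) fun _ _ => rfl
    rw [sum_powerset_insert hiW, sum_congr rfl hins, sum_sub_distrib, add_sub_cancel, ih]
    congr 1
    funext j
    by_cases hj : j = i
    · subst hj; simp
    · simp [hj]

lemma sub_eq_sum_quasiVol_slab (g : (Fin d → ℝ) → ℝ) (x : Fin d → ℝ) (i : Fin d) (y : ℝ) :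
    g (update x i y) - g x
      = ∑ U ∈ (univ : Finset (Fin d)).powerset with i ∈ U,
          quasiVol g U 0 (update 0 i (x i)) (update x i y) := by
  have hanch : ∀ z : Fin d → ℝ, g z = ∑ U ∈ (univ : Finset (Fin d)).powerset, quasiVol g U 0 0 z :=
    fun z => by rw [sum_powerset_quasiVol]; simp
  rw [hanch (update x i y), hanch x, ← sum_sub_distrib, sum_filter]
  refine sum_congr rfl fun U _ => ?_
  split_ifs with hiU
  · rw [quasiVol_split g hiU 0 0 (update x i y) (x i), update_idem, update_eq_self]
    ring
  · rw [sub_eq_zero]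
    exact quasiVol_congr g U (fun _ _ => rfl) (fun _ _ => rfl)
      fun j hj => update_of_ne (ne_of_mem_of_not_mem hj hiU) y x

def SubboxOn (S : Finset (Fin d)) (a b : Fin d → ℝ) : Prop :=
  ∀ j ∈ S, 0 ≤ a j ∧ a j ≤ b j ∧ b j ≤ 1

lemma SubboxOn.left_mem {S : Finset (Fin d)} {a b : Fin d → ℝ} (h : SubboxOn S a b) :
    ∀ j ∈ S, a j ∈ Set.Icc 0 1 := fun j hj => ⟨(h j hj).1, (h j hj).2.1.trans (h j hj).2.2⟩

lemma SubboxOn.right_mem {S : Finset (Fin d)} {a b : Fin d → ℝ} (h : SubboxOn S a b) :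
    ∀ j ∈ S, b j ∈ Set.Icc 0 1 := fun j hj => ⟨(h j hj).1.trans (h j hj).2.1, (h j hj).2.2⟩

lemma vertex_mem_Icc {S : Finset (Fin d)} {a b : Fin d → ℝ}
    (ha : ∀ j ∈ S, a j ∈ Set.Icc 0 1) (hb : ∀ j ∈ S, b j ∈ Set.Icc 0 1) (T : Finset (Fin d)) :
    vertex S 0 a b T ∈ Set.Icc (0 : Fin d → ℝ) 1 := by
  have h : ∀ j, vertex S 0 a b T j ∈ Set.Icc 0 1 := by
    intro j
    by_cases hj : j ∈ S
    · by_cases hjT : j ∈ T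
      · simpa [vertex, hj, hjT] using ha j hj
      · simpa [vertex, hj, hjT] using hb j hj
    · simp [vertex, hj]
  exact ⟨fun j => (h j).1, fun j => (h j).2⟩

lemma quasiVol_congr_of_eqOn {f g : (Fin d → ℝ) → ℝ} (hfg : Set.EqOn f g (Set.Icc 0 1))
    {S : Finset (Fin d)} {a b : Fin d → ℝ}
    (ha : ∀ j ∈ S, a j ∈ Set.Icc 0 1) (hb : ∀ j ∈ S, b j ∈ Set.Icc 0 1) :
    quasiVol f S 0 a b = quasiVol g S 0 a b := by
  simp only [quasiVol_eq_sum_vertex]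
  exact sum_congr rfl fun T _ => by rw [hfg (vertex_mem_Icc ha hb T)]

namespace CompletelyMonotone

variable {g : (Fin d → ℝ) → ℝ} {S : Finset (Fin d)} {a b : Fin d → ℝ}

lemma quasiVol_nonneg (hg : CompletelyMonotone g) (hS : S.Nonempty) (hab : SubboxOn S a b) :
    0 ≤ quasiVol g S 0 a b := by
  set a' : Fin d → ℝ := fun j => if j ∈ S then a j else 0
  set b' : Fin d → ℝ := fun j => if j ∈ S then b j else 0
  have hcongr : quasiVol g S 0 a b = quasiVol g S 0 a' b' :=
    quasiVol_congr g S (fun _ _ => rfl) (fun j hj => by simp [a', hj])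
      (fun j hj => by simp [b', hj])
  have hpt : ∀ j, (0 ≤ a' j ∧ a' j ≤ b' j) ∧ b' j ≤ 1 := by
    intro j
    by_cases hj : j ∈ S
    · obtain ⟨h₀, h₁, h₂⟩ := hab j hj
      simp only [a', b', hj, if_true]
      exact ⟨⟨h₀, h₁⟩, h₂⟩
    · simp [a', b', hj]
  rw [hcongr]
  exact hg S hS 0 (fun _ _ => Or.inl rfl) a' b'
    ⟨fun j => (hpt j).1.1, fun j => (hpt j).1.2.trans (hpt j).2⟩
    ⟨fun j => (hpt j).1.1.trans (hpt j).1.2, fun j => (hpt j).2⟩ fun j => (hpt j).1.2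

/-- Cut `[a, b]` in every coordinate at `a' ≤ b'`: the quasi-volume of `[a, b]` is the sum of
those of the `3 ^ |S|` resulting cells, all nonnegative, one of which is `[a', b']`. -/
lemma quasiVol_mono (hg : CompletelyMonotone g) (hS : S.Nonempty) (hab : SubboxOn S a b)
    {a' b' : Fin d → ℝ} (ha : ∀ j ∈ S, a j ≤ a' j) (hab' : ∀ j ∈ S, a' j ≤ b' j)
    (hb : ∀ j ∈ S, b' j ≤ b j) :
    quasiVol g S 0 a' b' ≤ quasiVol g S 0 a b := by
  set t : Fin d → ℕ → ℝ := fun j v =>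
    if v = 0 then a j else if v = 1 then a' j else if v = 2 then b' j else b j
  have hsum := sum_quasiVol_cells g S 0 (fun _ => 3) t
  have hcell : ∀ k ∈ Fintype.piFinset (fun j => range (if j ∈ S then 3 else 1)),
      0 ≤ quasiVol g S 0 (fun j => t j (k j)) (fun j => t j (k j + 1)) := by
    intro k hk
    refine hg.quasiVol_nonneg hS fun j hj => ?_
    have hkj : k j < 3 := by simpa [hj] using Fintype.mem_piFinset.1 hk j
    obtain ⟨h₀, h₁, h₂⟩ := hab j hj
    have := ha j hj; have := hab' j hj; have := hb j hj
    interval_cases h : k j <;> simp only [t] <;> norm_num <;> refine ⟨?_, ?_, ?_⟩ <;> linarith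
  set k₀ : Fin d → ℕ := fun j => if j ∈ S then 1 else 0
  have hk₀ : k₀ ∈ Fintype.piFinset (fun j => range (if j ∈ S then 3 else 1)) := by
    rw [Fintype.mem_piFinset]
    intro j
    by_cases hj : j ∈ S <;> simp [k₀, hj]
  calc quasiVol g S 0 a' b'
      = quasiVol g S 0 (fun j => t j (k₀ j)) (fun j => t j (k₀ j + 1)) :=
        quasiVol_congr g S (fun _ _ => rfl) (fun j hj => by simp [t, k₀, hj])
          (fun j hj => by simp [t, k₀, hj])
    _ ≤ quasiVol g S 0 (fun j => t j 0) (fun j => t j 3) :=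
        hsum ▸ single_le_sum hcell hk₀
    _ = quasiVol g S 0 a b := by simp [t]

end CompletelyMonotone

namespace Grid

variable {S : Finset (Fin d)} {lo hi : Fin d → ℝ}

def cells (G : Grid d S lo hi) : Finset (Fin d → ℕ) :=
  Fintype.piFinset fun j => range (if j ∈ S then G.m j else 1)

lemma lt_m_of_mem_cells {G : Grid d S lo hi} {k : Fin d → ℕ} (hk : k ∈ G.cells) {j : Fin d}
    (hj : j ∈ S) : k j < G.m j := by
  simpa [hj] using Fintype.mem_piFinset.1 hk j

lemma sum_quasiVol_cells (G : Grid d S lo hi) (f : (Fin d → ℝ) → ℝ) (p : Fin d → ℝ) :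
    ∑ k ∈ G.cells, quasiVol f S p (fun j => G.t j (k j)) (fun j => G.t j (k j + 1))
      = quasiVol f S p lo hi := by
  rw [cells, _root_.sum_quasiVol_cells]
  exact quasiVol_congr f S (fun _ _ => rfl) G.first G.last

lemma t_mem_Icc (G : Grid d S 0 1) {j : Fin d} (hj : j ∈ S) {v : ℕ} (hv : v ≤ G.m j) :
    G.t j v ∈ Set.Icc 0 1 := by
  have h₀ := G.mono j hj 0 v v.zero_le hv
  have h₁ := G.mono j hj v (G.m j) hv le_rfl
  rw [G.first j hj] at h₀
  rw [G.last j hj] at h₁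
  exact ⟨h₀, h₁⟩

lemma subboxOn_cell (G : Grid d S 0 1) {k : Fin d → ℕ} (hk : k ∈ G.cells) :
    SubboxOn S (fun j => G.t j (k j)) (fun j => G.t j (k j + 1)) := fun j hj =>
  have hkj := G.lt_m_of_mem_cells hk hj
  ⟨(G.t_mem_Icc hj hkj.le).1, G.mono j hj _ _ (k j).le_succ hkj, (G.t_mem_Icc hj hkj).2⟩

lemma exists_layer (G : Grid d S lo hi) {j : Fin d} (hj : j ∈ S) {x : ℝ} (hlo : lo j ≤ x)
    (hhi : x < hi j) : ∃ κ < G.m j, G.t j κ ≤ x ∧ x < G.t j (κ + 1) := by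
  classical
  have hex : ∃ v, x < G.t j v := ⟨G.m j, by rwa [G.last j hj]⟩
  have hpos : Nat.find hex ≠ 0 := by
    intro h0
    have := Nat.find_spec hex
    rw [h0, G.first j hj] at this
    linarith
  refine ⟨Nat.find hex - 1, ?_, ?_, ?_⟩
  · have := Nat.find_min' hex (show x < G.t j (G.m j) by rwa [G.last j hj])
    omega
  · exact not_lt.1 (Nat.find_min hex (by omega))
  · rw [Nat.sub_add_cancel (Nat.one_le_iff_ne_zero.2 hpos)]
    exact Nat.find_spec hex

instance : Nonempty (Grid d S 0 1) :=
  ⟨{ m := fun _ => 1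
     t := fun _ v => min (v : ℝ) 1
     mono := fun _ _ _ _ hjk _ => min_le_min_right 1 (Nat.cast_le.2 hjk)
     first := fun _ _ => by simp
     last := fun _ _ => by simp }⟩

end Grid

lemma gridSum_eq_sum_cells (f : (Fin d → ℝ) → ℝ) {S : Finset (Fin d)} {p lo hi : Fin d → ℝ}
    (G : Grid d S lo hi) :
    gridSum f S p lo hi G
      = ∑ k ∈ G.cells, |quasiVol f S p (fun j => G.t j (k j)) (fun j => G.t j (k j + 1))| := rfl

namespace CompletelyMonotone

variable {g : (Fin d → ℝ) → ℝ} {S : Finset (Fin d)}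

lemma vitaliVar_eq (hg : CompletelyMonotone g) (hS : S.Nonempty) :
    vitaliVar g S 0 0 1 = quasiVol g S 0 0 1 := by
  have hsum : gridSum g S 0 0 1 = fun _ => quasiVol g S 0 0 1 := by
    funext G
    rw [gridSum_eq_sum_cells, ← G.sum_quasiVol_cells g 0]
    exact sum_congr rfl fun k hk => abs_of_nonneg (hg.quasiVol_nonneg hS (G.subboxOn_cell hk))
  rw [vitaliVar, hsum, Set.range_const, csSup_singleton]

end CompletelyMonotone

lemma RightCts.tendsto_quasiVol {f : (Fin d → ℝ) → ℝ} (hf : RightCts f) {S : Finset (Fin d)}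
    {i : Fin d} (hi : i ∈ S) {a b : Fin d → ℝ}
    (ha : ∀ j ∈ S, a j ∈ Set.Icc 0 1) (hb : ∀ j ∈ S, b j ∈ Set.Icc 0 1) :
    Tendsto (fun y => quasiVol f S 0 a (update b i y)) (𝓝[Set.Icc (b i) 1] (b i))
      (𝓝 (quasiVol f S 0 a b)) := by
  simp only [quasiVol_eq_sum_vertex]
  refine tendsto_finsetSum _ fun T _ => Tendsto.const_mul _ ?_
  by_cases hiT : i ∈ T
  · have hV : ∀ y, vertex S 0 a (update b i y) T = vertex S 0 a b T := fun y => by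
      funext j
      by_cases hj : j = i
      · subst hj; simp [vertex, hiT]
      · simp [vertex, hj]
    simpa only [hV] using tendsto_const_nhds
  · have hV : ∀ y, vertex S 0 a (update b i y) T = update (vertex S 0 a b T) i y := fun y => by
      funext j
      by_cases hj : j = i
      · subst hj; simp [vertex, hiT, hi]
      · simp [vertex, hj]
    have hVi : vertex S 0 a b T i = b i := by simp [vertex, hiT, hi]
    simpa only [hV, hVi] using hf _ (vertex_mem_Icc ha hb T) i

lemma quasiVol_eq_sub_of_decomp {f fp fm : (Fin d → ℝ) → ℝ}
    (hdec : ∀ x ∈ Set.Icc (0 : Fin d → ℝ) 1, f x = f 0 + fp x - fm x)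
    {S : Finset (Fin d)} (hS : S.Nonempty) {a b : Fin d → ℝ}
    (ha : ∀ j ∈ S, a j ∈ Set.Icc 0 1) (hb : ∀ j ∈ S, b j ∈ Set.Icc 0 1) :
    quasiVol f S 0 a b = quasiVol fp S 0 a b - quasiVol fm S 0 a b := by
  rw [quasiVol_congr_of_eqOn (g := fun x => f 0 + fp x - fm x) hdec ha hb, quasiVol_sub,
    quasiVol_add, quasiVol_const _ hS, zero_add]

/-- Clamped to `x` off the coordinate `i`, a box either stays inside `[lo, hi]` or
degenerates. -/
lemma CompletelyMonotone.quasiVol_clamp_le {g : (Fin d → ℝ) → ℝ} (hg : CompletelyMonotone g)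
    {U : Finset (Fin d)} {i : Fin d} (hi : i ∈ U) {lo hi' x : Fin d → ℝ}
    (hbox : SubboxOn U lo hi') {a b : ℝ} (ha : lo i ≤ a) (hab : a ≤ b) (hb : b ≤ hi' i) :
    quasiVol g U 0 (fun j => if j = i then a else min (lo j) (x j))
      (fun j => if j = i then b else min (hi' j) (x j)) ≤ quasiVol g U 0 lo hi' := by
  by_cases hlo : ∀ j ∈ U, j ≠ i → lo j ≤ x j
  · refine hg.quasiVol_mono ⟨i, hi⟩ hbox (fun j hj => ?_) (fun j hj => ?_) (fun j hj => ?_)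
    all_goals by_cases hji : j = i
    all_goals simp only [hji, if_true, if_false]
    · subst hji; exact ha
    · exact le_min le_rfl (hlo j hj hji)
    · exact hab
    · exact min_le_min_right _ (hbox j hj).2.1
    · subst hji; exact hb
    · exact min_le_left _ _
  · push Not at hlo
    obtain ⟨j, hj, hji, hxj⟩ := hlo
    rw [quasiVol_eq_zero_of_eq g hj (by simp only [hji, if_false, min_eq_right hxj.le,
      min_eq_right (hxj.le.trans (hbox j hj).2.1)])]
    exact hg.quasiVol_nonneg ⟨i, hi⟩ hbox

namespace Grid

variable {U : Finset (Fin d)} {lo hi : Fin d → ℝ}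

/-- Partition points of the columns of `G` inside the slab `[0, x] ∩ {x i ≤ z i ≤ y}`: those of
`G` clamped to `x` off the coordinate `i`, and the single layer `[x i, y]` in coordinate `i`. -/
def slabT (G : Grid d U lo hi) (x : Fin d → ℝ) (i : Fin d) (y : ℝ) (j : Fin d) (v : ℕ) : ℝ :=
  if j = i then (if v = 0 then x i else y) else min (G.t j v) (x j)

def slabCells (G : Grid d U lo hi) (i : Fin d) : Finset (Fin d → ℕ) :=
  Fintype.piFinset fun j => range (if j ∈ U then update G.m i 1 j else 1)

lemma eq_zero_of_mem_slabCells {G : Grid d U lo hi} {i : Fin d} (hi : i ∈ U) {k : Fin d → ℕ}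
    (hk : k ∈ G.slabCells i) : k i = 0 := by
  simpa [hi] using Fintype.mem_piFinset.1 hk i

lemma sum_quasiVol_slab (G : Grid d U 0 1) {x : Fin d → ℝ} (hx : x ∈ Set.Icc 0 1)
    (g : (Fin d → ℝ) → ℝ) (i : Fin d) (y : ℝ) :
    ∑ k ∈ G.slabCells i, quasiVol g U 0 (fun j => G.slabT x i y j (k j))
        (fun j => G.slabT x i y j (k j + 1))
      = quasiVol g U 0 (update 0 i (x i)) (update x i y) := by
  rw [slabCells, _root_.sum_quasiVol_cells]
  refine quasiVol_congr g U (fun _ _ => rfl) (fun j hj => ?_) (fun j hj => ?_)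
  all_goals by_cases hji : j = i
  all_goals simp only [slabT, hji, if_true, if_false, update_self, update_of_ne, ne_eq,
    not_false_eq_true, one_ne_zero]
  · rw [G.first j hj]; exact min_eq_left (hx.1 j)
  · rw [G.last j hj]; exact min_eq_right (hx.2 j)

lemma mem_cells_update_of_mem_slabCells (G : Grid d U lo hi) {i : Fin d} (hi : i ∈ U)
    {k : Fin d → ℕ} (hk : k ∈ G.slabCells i) {κ : ℕ} (hκ : κ < G.m i) :
    update k i κ ∈ G.cells := by
  rw [cells, Fintype.mem_piFinset]
  intro j
  have := Fintype.mem_piFinset.1 hk j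
  by_cases hji : j = i
  · subst hji; simpa [hi] using hκ
  · simpa [hji] using this

lemma subboxOn_slabCell (G : Grid d U 0 1) {x : Fin d → ℝ} (hx : x ∈ Set.Icc 0 1) {i : Fin d}
    (hi : i ∈ U) {k : Fin d → ℕ} (hk : k ∈ G.slabCells i) {y : ℝ} (hxy : x i ≤ y) (hy : y ≤ 1) :
    SubboxOn U (fun j => G.slabT x i y j (k j)) (fun j => G.slabT x i y j (k j + 1)) := by
  intro j hj
  by_cases hji : j = i
  · subst hji
    simpa [slabT, G.eq_zero_of_mem_slabCells hj hk] using ⟨hx.1 j, hxy, hy⟩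
  · have hkj : k j < G.m j := by simpa [hj, hji] using Fintype.mem_piFinset.1 hk j
    simp only [slabT, hji, if_false]
    exact ⟨le_min (G.t_mem_Icc hj hkj.le).1 (hx.1 j), min_le_min_right _ (G.mono j hj _ _
      (k j).le_succ hkj), (min_le_right _ _).trans (hx.2 j)⟩

lemma sum_slabCells_update_le_sum_cells (G : Grid d U lo hi) {i : Fin d} (hi : i ∈ U)
    {κ : ℕ} (hκ : κ < G.m i) {F : (Fin d → ℕ) → ℝ} (hF : ∀ k ∈ G.cells, 0 ≤ F k) :
    ∑ k ∈ G.slabCells i, F (update k i κ) ≤ ∑ k ∈ G.cells, F k := by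
  classical
  rw [← sum_image (f := F) (g := fun k => update k i κ)]
  · refine sum_le_sum_of_subset_of_nonneg ?_ fun k hk _ => hF k hk
    intro k hk
    obtain ⟨k', hk', rfl⟩ := mem_image.1 hk
    exact G.mem_cells_update_of_mem_slabCells hi hk' hκ
  · intro k hk k' hk' h
    have h0 := G.eq_zero_of_mem_slabCells hi hk
    have h0' := G.eq_zero_of_mem_slabCells hi hk'
    funext j
    by_cases hji : j = i
    · subst hji; rw [h0, h0']
    · simpa [hji] using congrFun h j

end Grid

lemma CompletelyMonotone.quasiVol_slabCell_le {g : (Fin d → ℝ) → ℝ} (hg : CompletelyMonotone g)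
    {U : Finset (Fin d)} (G : Grid d U 0 1) {i : Fin d} (hi : i ∈ U) {k : Fin d → ℕ}
    (hk : k ∈ G.slabCells i) {κ : ℕ} (hκ : κ < G.m i) {x : Fin d → ℝ} (hκx : G.t i κ ≤ x i)
    {y : ℝ} (hxy : x i ≤ y) (hyκ : y ≤ G.t i (κ + 1)) :
    quasiVol g U 0 (fun j => G.slabT x i y j (k j)) (fun j => G.slabT x i y j (k j + 1))
      ≤ quasiVol g U 0 (fun j => G.t j (update k i κ j)) (fun j => G.t j (update k i κ j + 1)) := by
  have hk0 := G.eq_zero_of_mem_slabCells hi hk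
  have hcell := G.subboxOn_cell (G.mem_cells_update_of_mem_slabCells hi hk hκ)
  convert hg.quasiVol_clamp_le hi hcell (x := x) (by simpa using hκx) hxy (by simpa using hyκ)
    using 2 <;>
  · funext j
    by_cases hji : j = i
    · subst hji; simp [Grid.slabT, hk0]
    · simp [Grid.slabT, hji]

lemma RightCts.tendsto_quasiVol_slabCell {f : (Fin d → ℝ) → ℝ} (hf : RightCts f)
    {U : Finset (Fin d)} (G : Grid d U 0 1) {x : Fin d → ℝ} (hx : x ∈ Set.Icc 0 1) {i : Fin d}
    (hxi : x i < 1) (hi : i ∈ U) {k : Fin d → ℕ} (hk : k ∈ G.slabCells i) :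
    Tendsto (fun y => quasiVol f U 0 (fun j => G.slabT x i y j (k j))
      (fun j => G.slabT x i y j (k j + 1))) (𝓝[>] (x i)) (𝓝 0) := by
  have hk0 := G.eq_zero_of_mem_slabCells hi hk
  set L : Fin d → ℝ := fun j => G.slabT x i (x i) j (k j)
  set H : Fin d → ℝ := fun j => G.slabT x i (x i) j (k j + 1)
  have hL : ∀ y, (fun j => G.slabT x i y j (k j)) = L := fun y => by
    funext j; by_cases hji : j = i <;> simp [L, Grid.slabT, hji, hk0]
  have hH : ∀ y, (fun j => G.slabT x i y j (k j + 1)) = update H i y := fun y => by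
    funext j; by_cases hji : j = i <;> simp [H, Grid.slabT, hji, hk0]
  have hHi : H i = x i := by simp [H, Grid.slabT]
  have hbox := G.subboxOn_slabCell hx hi hk le_rfl hxi.le
  have hlim : Tendsto (fun y => quasiVol f U 0 L (update H i y)) (𝓝[Set.Icc (H i) 1] (H i))
      (𝓝 (quasiVol f U 0 L H)) := hf.tendsto_quasiVol hi hbox.left_mem hbox.right_mem
  rw [quasiVol_eq_zero_of_eq f hi (by simp [L, hHi, Grid.slabT]), hHi] at hlim
  rw [← nhdsWithin_Ioc_eq_nhdsGT hxi]
  simpa only [hL, hH] using hlim.mono_left (nhdsWithin_mono _ Set.Ioc_subset_Icc_self)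

lemma subboxOn_slab {U : Finset (Fin d)} {x : Fin d → ℝ} (hx : x ∈ Set.Icc 0 1) {i : Fin d}
    {y : ℝ} (hxy : x i ≤ y) (hy : y ≤ 1) : SubboxOn U (update 0 i (x i)) (update x i y) := by
  intro j _
  by_cases hji : j = i
  · subst hji; simpa using ⟨hx.1 j, hxy, hy⟩
  · simpa [hji] using ⟨hx.1 j, hx.2 j⟩

lemma abs_sub_eq_add_sub_two_mul_min (p m : ℝ) : |p - m| = p + m - 2 * min p m := by
  linarith [max_sub_min_eq_abs' p m, min_add_max p m]

section JordanDecomposition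

variable {f fp fm : (Fin d → ℝ) → ℝ} {S : Finset (Fin d)}

lemma gridSum_eq_sub_sum_min (hdec : ∀ x ∈ Set.Icc (0 : Fin d → ℝ) 1, f x = f 0 + fp x - fm x)
    (hS : S.Nonempty) (G : Grid d S 0 1) :
    gridSum f S 0 0 1 G = quasiVol fp S 0 0 1 + quasiVol fm S 0 0 1
      - 2 * ∑ k ∈ G.cells, min (quasiVol fp S 0 (fun j => G.t j (k j)) (fun j => G.t j (k j + 1)))
          (quasiVol fm S 0 (fun j => G.t j (k j)) (fun j => G.t j (k j + 1))) := by
  rw [gridSum_eq_sum_cells, ← G.sum_quasiVol_cells fp 0, ← G.sum_quasiVol_cells fm 0, mul_sum,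
    ← sum_add_distrib, ← sum_sub_distrib]
  refine sum_congr rfl fun k hk => ?_
  have hcell := G.subboxOn_cell hk
  rw [quasiVol_eq_sub_of_decomp hdec hS hcell.left_mem hcell.right_mem,
    abs_sub_eq_add_sub_two_mul_min]

lemma vitaliVar_le_of_le_sum_min (hfp : CompletelyMonotone fp) (hfm : CompletelyMonotone fm)
    (hdec : ∀ x ∈ Set.Icc (0 : Fin d → ℝ) 1, f x = f 0 + fp x - fm x) (hS : S.Nonempty)
    {c : ℝ} (hc : ∀ G : Grid d S 0 1, c ≤ ∑ k ∈ G.cells,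
      min (quasiVol fp S 0 (fun j => G.t j (k j)) (fun j => G.t j (k j + 1)))
        (quasiVol fm S 0 (fun j => G.t j (k j)) (fun j => G.t j (k j + 1)))) :
    vitaliVar f S 0 0 1 ≤ vitaliVar fp S 0 0 1 + vitaliVar fm S 0 0 1 - 2 * c := by
  rw [hfp.vitaliVar_eq hS, hfm.vitaliVar_eq hS]
  refine csSup_le (Set.range_nonempty _) ?_
  rintro _ ⟨G, rfl⟩
  rw [gridSum_eq_sub_sum_min hdec hS G]
  linarith [hc G]

lemma vitaliVar_le_add (hfp : CompletelyMonotone fp) (hfm : CompletelyMonotone fm)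
    (hdec : ∀ x ∈ Set.Icc (0 : Fin d → ℝ) 1, f x = f 0 + fp x - fm x) (hS : S.Nonempty) :
    vitaliVar f S 0 0 1 ≤ vitaliVar fp S 0 0 1 + vitaliVar fm S 0 0 1 := by
  simpa using vitaliVar_le_of_le_sum_min hfp hfm hdec hS (c := 0) fun G =>
    sum_nonneg fun k hk => le_min (hfp.quasiVol_nonneg hS (G.subboxOn_cell hk))
      (hfm.quasiVol_nonneg hS (G.subboxOn_cell hk))

/-- As `f` is right-continuous, thin slabs carry almost equal `fp`- and `fm`-mass; in a grid this
mass lies in the cells of the layer containing `x i`, where it cancels in `f`. -/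
lemma le_sum_min_cells_of_le_slab (hf : RightCts f) (hfp : CompletelyMonotone fp)
    (hfm : CompletelyMonotone fm) (hdec : ∀ x ∈ Set.Icc (0 : Fin d → ℝ) 1, f x = f 0 + fp x - fm x)
    {x : Fin d → ℝ} (hx : x ∈ Set.Icc 0 1) {i : Fin d} (hxi : x i < 1) {U : Finset (Fin d)}
    (hi : i ∈ U) {c : ℝ}
    (hslab : ∀ y ∈ Set.Ioc (x i) 1, c ≤ quasiVol fp U 0 (update 0 i (x i)) (update x i y))
    (G : Grid d U 0 1) :
    c ≤ ∑ k ∈ G.cells, min (quasiVol fp U 0 (fun j => G.t j (k j)) (fun j => G.t j (k j + 1)))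
      (quasiVol fm U 0 (fun j => G.t j (k j)) (fun j => G.t j (k j + 1))) := by
  obtain ⟨κ, hκ, hκx, hxκ⟩ := G.exists_layer hi (hx.1 i) hxi
  set col : ((Fin d → ℝ) → ℝ) → ℝ → (Fin d → ℕ) → ℝ := fun g y k =>
    quasiVol g U 0 (fun j => G.slabT x i y j (k j)) (fun j => G.slabT x i y j (k j + 1))
  set cell : ((Fin d → ℝ) → ℝ) → (Fin d → ℕ) → ℝ := fun g k =>
    quasiVol g U 0 (fun j => G.t j (k j)) (fun j => G.t j (k j + 1))
  have hlim : Tendsto (fun y => ∑ k ∈ G.slabCells i, |col f y k|) (𝓝[>] (x i)) (𝓝 0) := by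
    simpa using tendsto_finsetSum _ fun k hk => (hf.tendsto_quasiVol_slabCell G hx hxi hi hk).abs
  refine le_of_forall_pos_lt_add fun δ hδ => ?_
  obtain ⟨y, hyδ, hy⟩ := ((hlim.eventually (gt_mem_nhds hδ)).and (Ioo_mem_nhdsGT hxκ)).exists
  have hy1 : y ≤ 1 := hy.2.le.trans (G.t_mem_Icc hi hκ).2
  have hcol : ∀ k ∈ G.slabCells i,
      col fp y k ≤ min (cell fp (update k i κ)) (cell fm (update k i κ)) + |col f y k| := by
    intro k hk
    have hbox := G.subboxOn_slabCell hx hi hk hy.1.le hy1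
    have hsub : col f y k = col fp y k - col fm y k :=
      quasiVol_eq_sub_of_decomp hdec ⟨i, hi⟩ hbox.left_mem hbox.right_mem
    have hp : col fp y k ≤ cell fp (update k i κ) :=
      hfp.quasiVol_slabCell_le G hi hk hκ hκx hy.1.le hy.2.le
    have hm : col fm y k ≤ cell fm (update k i κ) :=
      hfm.quasiVol_slabCell_le G hi hk hκ hκx hy.1.le hy.2.le
    rw [← min_add_add_right]
    exact le_min (by linarith [abs_nonneg (col f y k)]) (by linarith [le_abs_self (col f y k)])
  have hcell : ∀ k ∈ G.cells, 0 ≤ min (cell fp k) (cell fm k) := fun k hk =>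
    le_min (hfp.quasiVol_nonneg ⟨i, hi⟩ (G.subboxOn_cell hk))
      (hfm.quasiVol_nonneg ⟨i, hi⟩ (G.subboxOn_cell hk))
  calc c ≤ quasiVol fp U 0 (update 0 i (x i)) (update x i y) := hslab y ⟨hy.1, hy1⟩
    _ = ∑ k ∈ G.slabCells i, col fp y k := (G.sum_quasiVol_slab hx fp i y).symm
    _ ≤ ∑ k ∈ G.slabCells i,
          (min (cell fp (update k i κ)) (cell fm (update k i κ)) + |col f y k|) :=
        sum_le_sum hcol
    _ < ∑ k ∈ G.cells, min (cell fp k) (cell fm k) + δ := by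
        rw [sum_add_distrib]
        exact add_lt_add_of_le_of_lt (G.sum_slabCells_update_le_sum_cells hi hκ hcell) hyδ

lemma hkVar0_le_sub_of_le_slab (hf : RightCts f) (hfp : CompletelyMonotone fp)
    (hfm : CompletelyMonotone fm) (hdec : ∀ x ∈ Set.Icc (0 : Fin d → ℝ) 1, f x = f 0 + fp x - fm x)
    {x : Fin d → ℝ} (hx : x ∈ Set.Icc 0 1) {i : Fin d} (hxi : x i < 1) {U : Finset (Fin d)}
    (hi : i ∈ U) {c : ℝ}
    (hslab : ∀ y ∈ Set.Ioc (x i) 1, c ≤ quasiVol fp U 0 (update 0 i (x i)) (update x i y)) :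
    hkVar0 f ≤ hkVar0 fp + hkVar0 fm - 2 * c := by
  have hU : U ∈ (univ : Finset (Fin d)).powerset.erase ∅ :=
    mem_erase.2 ⟨ne_empty_of_mem hi, mem_powerset.2 (subset_univ U)⟩
  have hS : ∀ S ∈ (univ : Finset (Fin d)).powerset.erase ∅, vitaliVar f S 0 0 1
      ≤ vitaliVar fp S 0 0 1 + vitaliVar fm S 0 0 1 - if S = U then 2 * c else 0 := by
    intro S hS
    have hSne : S.Nonempty := nonempty_iff_ne_empty.2 (mem_erase.1 hS).1
    split_ifs with hSU
    · subst hSU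
      exact vitaliVar_le_of_le_sum_min hfp hfm hdec hSne
        (le_sum_min_cells_of_le_slab hf hfp hfm hdec hx hxi hi hslab)
    · simpa using vitaliVar_le_add hfp hfm hdec hSne
  unfold hkVar0 hkVarOn
  refine (sum_le_sum hS).trans_eq ?_
  rw [sum_sub_distrib, sum_add_distrib, sum_ite_eq' _ U, if_pos hU]

lemma tendsto_quasiVol_slab_of_hkVar0_eq (hf : RightCts f) (hfp : CompletelyMonotone fp)
    (hfm : CompletelyMonotone fm) (hdec : ∀ x ∈ Set.Icc (0 : Fin d → ℝ) 1, f x = f 0 + fp x - fm x)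
    (hvar : hkVar0 f = hkVar0 fp + hkVar0 fm)
    {x : Fin d → ℝ} (hx : x ∈ Set.Icc 0 1) {i : Fin d} (hxi : x i < 1) {U : Finset (Fin d)}
    (hi : i ∈ U) :
    Tendsto (fun y => quasiVol fp U 0 (update 0 i (x i)) (update x i y))
      (𝓝[Set.Icc (x i) 1] (x i)) (𝓝 0) := by
  have hU : U.Nonempty := ⟨i, hi⟩
  refine tendsto_order.2 ⟨fun a ha => eventually_nhdsWithin_of_forall fun y hy =>
    ha.trans_le (hfp.quasiVol_nonneg hU (subboxOn_slab hx hy.1 hy.2)), fun c hc => ?_⟩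
  obtain ⟨y₀, hy₀, hlt⟩ : ∃ y ∈ Set.Ioc (x i) 1,
      quasiVol fp U 0 (update 0 i (x i)) (update x i y) < c := by
    by_contra! h
    linarith [hkVar0_le_sub_of_le_slab hf hfp hfm hdec hx hxi hi h]
  filter_upwards [inter_mem_nhdsWithin _ (Iio_mem_nhds hy₀.1)] with y hy
  refine lt_of_le_of_lt ?_ hlt
  refine hfp.quasiVol_mono hU (subboxOn_slab hx hy₀.1.le hy₀.2) (fun _ _ => le_rfl)
    (fun j _ => (subboxOn_slab hx hy.1.1 hy.1.2 j ‹_›).2.1) fun j _ => ?_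
  by_cases hji : j = i
  · subst hji; simpa using hy.2.le
  · simp [hji]

theorem rightCts_of_hkVar0_eq (hf : RightCts f) (hfp : CompletelyMonotone fp)
    (hfm : CompletelyMonotone fm) (hdec : ∀ x ∈ Set.Icc (0 : Fin d → ℝ) 1, f x = f 0 + fp x - fm x)
    (hvar : hkVar0 f = hkVar0 fp + hkVar0 fm) : RightCts fp := by
  intro x hx i
  rcases (hx.2 i).lt_or_eq with hxi | hxi
  · have hdiff : Tendsto (fun y => fp (update x i y) - fp x) (𝓝[Set.Icc (x i) 1] (x i))
        (𝓝 0) := by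
      simp_rw [sub_eq_sum_quasiVol_slab]
      simpa using tendsto_finsetSum _ fun U hU =>
        tendsto_quasiVol_slab_of_hkVar0_eq hf hfp hfm hdec hvar hx hxi (mem_filter.1 hU).2
    simpa using hdiff.add_const (fp x)
  · have h1 : x i = 1 := hxi
    rw [h1, Set.Icc_self, nhdsWithin_singleton, ← h1]
    simpa using tendsto_pure_nhds (fun y => fp (update x i y)) (x i)

end JordanDecomposition

lemma RightCts.const_sub {f : (Fin d → ℝ) → ℝ} (hf : RightCts f) (c : ℝ) :
    RightCts fun z => c - f z :=
  fun x hx i => (hf x hx i).const_sub c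

lemma hkVarOn_const_sub (f : (Fin d → ℝ) → ℝ) (c : ℝ) (p lo hi : Fin d → ℝ) :
    hkVarOn (fun z => c - f z) p lo hi = hkVarOn f p lo hi := by
  refine sum_congr rfl fun S hS => ?_
  have hSne : S.Nonempty := nonempty_iff_ne_empty.2 (mem_erase.1 hS).1
  have hgrid : gridSum (fun z => c - f z) S p lo hi = gridSum f S p lo hi := by
    funext G
    refine sum_congr rfl fun k _ => ?_
    rw [quasiVol_sub (fun _ => c), quasiVol_const c hSne, zero_sub, abs_neg]
  rw [vitaliVar, vitaliVar, hgrid]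

theorem stmt17_general {d : ℕ} (f fp fm : (Fin d → ℝ) → ℝ) (hrc : RightCts f)
    (hfpcm : CompletelyMonotone fp) (hfmcm : CompletelyMonotone fm)
    (hdec : ∀ x ∈ Set.Icc (0 : Fin d → ℝ) 1, f x = f 0 + fp x - fm x)
    (hvar : hkVar0 f = hkVar0 fp + hkVar0 fm) :
    RightCts fp ∧ RightCts fm := by
  refine ⟨rightCts_of_hkVar0_eq hrc hfpcm hfmcm hdec hvar,
    rightCts_of_hkVar0_eq (f := fun z => 2 * f 0 - f z) (hrc.const_sub _) hfmcm hfpcm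
      (fun x hx => ?_) ?_⟩
  · rw [hdec x hx]; ring
  · rw [hkVar0, hkVarOn_const_sub, ← hkVar0, hvar, add_comm]

/-- If `f` is right-continuous, then the two components of its Jordan decomposition are
right-continuous as well. -/
theorem stmt17 {d : ℕ} (f fp fm : (Fin d → ℝ) → ℝ) (hrc : RightCts f) (hbv : BddHKVar f)
    (hfpcm : CompletelyMonotone fp) (hfmcm : CompletelyMonotone fm)
    (hfp0 : fp 0 = 0) (hfm0 : fm 0 = 0)
    (hdec : ∀ x ∈ Set.Icc (0 : Fin d → ℝ) 1, f x = f 0 + fp x - fm x)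
    (hvar : hkVar0 f = hkVar0 fp + hkVar0 fm) :
    RightCts fp ∧ RightCts fm :=
  stmt17_general f fp fm hrc hfpcm hfmcm hdec hvar
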